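/- Let D be a real n×d matrix, ν > 0, γ > 0 with ν‖DᵀD‖ < γ², and P a real symmetric n×n matrix with 0 ≤ P ≤ νI. Then ‖P D (γ²I_d − Dᵀ P D)⁻¹ Dᵀ P‖ ≤ ν² ‖DᵀD‖ / (γ² − ν‖DᵀD‖). -/

import Mathlib

/-!
On real matrices the spectral norm is Mathlib's L2 operator norm, for which `Matrix n n ℝ` has an
isometric continuous functional calculus over `ℝ`, so order bounds become spectral, hence norm,
bounds. From `0 ≤ P ≤ ν` we get `‖P‖ ≤ ν` and `DᵀPD ≤ ν‖DᵀD‖`, hence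
`γ² - DᵀPD ≥ ε := γ² - ν‖DᵀD‖ > 0` and `‖(γ² - DᵀPD)⁻¹‖ ≤ ε⁻¹`. Submultiplicativity then bounds the
correction term by `ν ‖D‖ ε⁻¹ ‖Dᵀ‖ ν = ν²‖DᵀD‖ / ε`.
-/

open Matrix

noncomputable def specNorm {m n : ℕ} (M : Matrix (Fin m) (Fin n) ℝ) : ℝ :=
  ‖LinearMap.toContinuousLinearMap (Matrix.toEuclideanLin M)‖

section IsometricRealCFC

/- Mathlib states these for a complex `CStarAlgebra`; real matrices only have an isometric
real functional calculus. -/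

variable {A : Type*} [NormedRing A] [StarRing A] [NormedAlgebra ℝ A] [PartialOrder A]
  [StarOrderedRing A] [IsometricContinuousFunctionalCalculus ℝ A IsSelfAdjoint]
  [NonnegSpectrumClass ℝ A]

lemma IsSelfAdjoint.le_algebraMap_norm_of_isometric {a : A} (ha : IsSelfAdjoint a) :
    a ≤ algebraMap ℝ A ‖a‖ :=
  (le_algebraMap_iff_spectrum_le ha).2 fun _ hx ↦
    (Real.le_norm_self _).trans (IsometricContinuousFunctionalCalculus.norm_spectrum_le a hx ha)

lemma norm_le_of_nonneg_of_le_algebraMap {a : A} {r : ℝ} (hr : 0 ≤ r) (ha : 0 ≤ a)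
    (har : a ≤ algebraMap ℝ A r) : ‖a‖ ≤ r := by
  rw [← cfc_id' ℝ a]
  refine norm_cfc_le hr fun x hx ↦ ?_
  rw [Real.norm_of_nonneg (spectrum_nonneg_of_nonneg ha hx)]
  exact (le_algebraMap_iff_spectrum_le (.of_nonneg ha)).1 har x hx

lemma norm_ringInverse_le_of_algebraMap_le [StarModule ℝ A] {a : A} {ε : ℝ} (hε : 0 < ε)
    (hεa : algebraMap ℝ A ε ≤ a) : ‖Ring.inverse a‖ ≤ ε⁻¹ := by
  have hsa : IsSelfAdjoint a := by
    simpa using (IsSelfAdjoint.of_nonneg (sub_nonneg.2 hεa)).add (.algebraMap A (.all ε))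
  have hspec : ∀ x ∈ spectrum ℝ a, ε ≤ x := (algebraMap_le_iff_le_spectrum hsa).1 hεa
  have hunit : IsUnit a :=
    spectrum.isUnit_of_zero_notMem ℝ fun h0 ↦ (hε.trans_le (hspec 0 h0)).false
  rw [← cfc_ringInverse_id (R := ℝ) a hunit hsa]
  refine norm_cfc_le (inv_nonneg.2 hε.le) fun x hx ↦ ?_
  rw [Real.norm_of_nonneg (inv_nonneg.2 (hε.trans_le (hspec x hx)).le)]
  exact inv_anti₀ hε (hspec x hx)

end IsometricRealCFC

open scoped Matrix.Norms.L2Operator MatrixOrder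

namespace Matrix

variable {m n : Type*} [Fintype m] [Fintype n]

lemma transpose_mul_mul_le_transpose_mul_mul {P Q : Matrix m m ℝ} (hPQ : P ≤ Q)
    (D : Matrix m n ℝ) : Dᵀ * P * D ≤ Dᵀ * Q * D := by
  rw [le_iff, ← Matrix.sub_mul, ← Matrix.mul_sub, ← conjTranspose_eq_transpose_of_trivial]
  exact hPQ.conjTranspose_mul_mul_same D

lemma l2_opNorm_transpose [DecidableEq m] [DecidableEq n] (D : Matrix m n ℝ) : ‖Dᵀ‖ = ‖D‖ := by
  rw [← conjTranspose_eq_transpose_of_trivial, l2_opNorm_conjTranspose]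

lemma l2_opNorm_transpose_mul_self [DecidableEq n] (D : Matrix m n ℝ) :
    ‖Dᵀ * D‖ = ‖D‖ * ‖D‖ := by
  rw [← conjTranspose_eq_transpose_of_trivial, l2_opNorm_conjTranspose_mul_self]

lemma transpose_mul_mul_le_algebraMap [DecidableEq m] [DecidableEq n] {P : Matrix m m ℝ} {ν : ℝ}
    (hPν : P ≤ algebraMap ℝ _ ν) (hν : 0 ≤ ν) (D : Matrix m n ℝ) :
    Dᵀ * P * D ≤ algebraMap ℝ _ (ν * ‖Dᵀ * D‖) := by
  have hDD : IsSelfAdjoint (Dᵀ * D) := by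
    simpa only [conjTranspose_eq_transpose_of_trivial] using
      (isHermitian_conjTranspose_mul_self D).isSelfAdjoint
  calc Dᵀ * P * D ≤ Dᵀ * algebraMap ℝ (Matrix m m ℝ) ν * D :=
        transpose_mul_mul_le_transpose_mul_mul hPν D
    _ = ν • (Dᵀ * D) := by simp [Algebra.algebraMap_eq_smul_one]
    _ ≤ ν • algebraMap ℝ _ ‖Dᵀ * D‖ :=
      smul_le_smul_of_nonneg_left hDD.le_algebraMap_norm_of_isometric hν
    _ = algebraMap ℝ _ (ν * ‖Dᵀ * D‖) := by rw [map_mul, Algebra.smul_def]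

end Matrix

lemma specNorm_eq_l2_opNorm {m n : ℕ} (M : Matrix (Fin m) (Fin n) ℝ) : specNorm M = ‖M‖ := rfl

theorem stmt_12_general {n d : ℕ} (D : Matrix (Fin n) (Fin d) ℝ) (ν γ : ℝ)
    (hν : 0 < ν) (hsmall : ν * specNorm (Dᵀ * D) < γ ^ 2)
    (P : Matrix (Fin n) (Fin n) ℝ)
    (hP : P.PosSemidef)
    (hPν : (ν • (1 : Matrix (Fin n) (Fin n) ℝ) - P).PosSemidef) :
    specNorm (P * D * (γ ^ 2 • (1 : Matrix (Fin d) (Fin d) ℝ) - Dᵀ * P * D)⁻¹ * Dᵀ * P)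
      ≤ ν ^ 2 * specNorm (Dᵀ * D) / (γ ^ 2 - ν * specNorm (Dᵀ * D)) := by
  simp only [specNorm_eq_l2_opNorm] at hsmall ⊢
  set M := γ ^ 2 • (1 : Matrix (Fin d) (Fin d) ℝ) - Dᵀ * P * D
  set ε := γ ^ 2 - ν * ‖Dᵀ * D‖
  have hP_le : P ≤ algebraMap ℝ _ ν := by rwa [le_iff, Algebra.algebraMap_eq_smul_one]
  have hP_norm : ‖P‖ ≤ ν :=
    norm_le_of_nonneg_of_le_algebraMap hν.le (nonneg_iff_posSemidef.2 hP) hP_le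
  have hM : algebraMap ℝ _ ε ≤ M := by
    rw [map_sub, Algebra.algebraMap_eq_smul_one (γ ^ 2)]
    exact sub_le_sub_left (transpose_mul_mul_le_algebraMap hP_le hν.le D) _
  have hM_inv : ‖M⁻¹‖ ≤ ε⁻¹ := by
    rw [nonsing_inv_eq_ringInverse]
    exact norm_ringInverse_le_of_algebraMap_le (sub_pos.2 hsmall) hM
  calc ‖P * D * M⁻¹ * Dᵀ * P‖ ≤ ‖P‖ * ‖D‖ * ‖M⁻¹‖ * ‖Dᵀ‖ * ‖P‖ := by
        grw [l2_opNorm_mul, l2_opNorm_mul, l2_opNorm_mul, l2_opNorm_mul]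
    _ ≤ ν * ‖D‖ * ε⁻¹ * ‖D‖ * ν := by
        rw [l2_opNorm_transpose]; gcongr
    _ = ν ^ 2 * ‖Dᵀ * D‖ / ε := by
        rw [l2_opNorm_transpose_mul_self]; field_simp

/-- Uniform bound on the correction term `P̃ − P = P D (γ²I − Dᵀ P D)⁻¹ Dᵀ P`
of the modified Riccati equation: if `ν‖DᵀD‖ < γ²` and `0 ≤ P ≤ νI` is
symmetric, then `‖P D (γ²I − Dᵀ P D)⁻¹ Dᵀ P‖ ≤ ν²‖DᵀD‖/(γ² − ν‖DᵀD‖)`. -/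
theorem stmt_12 {n d : ℕ} (D : Matrix (Fin n) (Fin d) ℝ) (ν γ : ℝ)
    (hν : 0 < ν) (hγ : 0 < γ) (hsmall : ν * specNorm (Dᵀ * D) < γ ^ 2)
    (P : Matrix (Fin n) (Fin n) ℝ)
    (hP : P.PosSemidef)
    (hPν : (ν • (1 : Matrix (Fin n) (Fin n) ℝ) - P).PosSemidef) :
    specNorm (P * D * (γ ^ 2 • (1 : Matrix (Fin d) (Fin d) ℝ) - Dᵀ * P * D)⁻¹ * Dᵀ * P)
      ≤ ν ^ 2 * specNorm (Dᵀ * D) / (γ ^ 2 - ν * specNorm (Dᵀ * D)) :=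
  stmt_12_general D ν γ hν hsmall P hP hPν
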